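/- arXiv:2311.14261 — 2 statements merged into one kernel-verified Lean document; each statement's English description precedes it below -/
import Mathlib

section
/- Let L be a well-filtered dcpo. The map ψ : Q(H(L)) → H(Q(L)) defined by ψ(𝒦) = { K ∈ Q(L) : K ∩ A ≠ ∅ for all A ∈ 𝒦 } is well-defined, i.e., ψ(𝒦) is a Scott closed subset of Q(L). -/
/-!
A directed family in `Q(L)` has as supremum the intersection of its members: well-filteredness
makes this intersection nonempty and compact, and it is then the least upper bound. The same
property shows that for a Scott closed `A ⊆ L` the set `{K | K ∩ A ≠ ∅}` is Scott closed in
`Q(L)`: if the intersection missed `A`, it would lie in the Scott open set `Aᶜ`, and so would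
some member of the family. `ψ(𝒦)` is the intersection of these sets over `A ∈ 𝒦`.
-/

universe u

/-- A subset is Scott open: an upper set inaccessible by directed suprema. -/
def ScottOpen {α : Type u} [Preorder α] (U : Set α) : Prop :=
  IsUpperSet U ∧ ∀ d : Set α, d.Nonempty → DirectedOn (· ≤ ·) d →
    ∀ a : α, IsLUB d a → a ∈ U → (d ∩ U).Nonempty

/-- A subset is Scott closed: a lower set closed under directed suprema. -/
def ScottClosed {α : Type u} [Preorder α] (C : Set α) : Prop :=
  IsLowerSet C ∧ ∀ d : Set α, d ⊆ C → d.Nonempty → DirectedOn (· ≤ ·) d →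
    ∀ a : α, IsLUB d a → a ∈ C

/-- A dcpo: every nonempty directed subset has a supremum. -/
def IsDcpo (α : Type u) [Preorder α] : Prop :=
  ∀ d : Set α, d.Nonempty → DirectedOn (· ≤ ·) d → ∃ a, IsLUB d a

/-- Compactness with respect to the Scott topology. -/
def ScottCompact {α : Type u} [Preorder α] (K : Set α) : Prop :=
  ∀ 𝒰 : Set (Set α), (∀ U ∈ 𝒰, ScottOpen U) → K ⊆ ⋃₀ 𝒰 →
    ∃ F : Set (Set α), F ⊆ 𝒰 ∧ F.Finite ∧ K ⊆ ⋃₀ F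

/-- Well-filteredness of the Scott topology of a poset. -/
def WellFiltered (α : Type u) [Preorder α] : Prop :=
  ∀ 𝒞 : Set (Set α), 𝒞.Nonempty →
    (∀ K ∈ 𝒞, ScottCompact K ∧ IsUpperSet K) →
    DirectedOn (fun A B : Set α => B ⊆ A) 𝒞 →
    ∀ U : Set α, ScottOpen U → ⋂₀ 𝒞 ⊆ U → ∃ K ∈ 𝒞, K ⊆ U

/-- The Hoare power construction: Scott closed subsets ordered by inclusion. -/
structure HPoset (α : Type u) [Preorder α] where
  carrier : Set α
  closed' : ScottClosed carrier

instance {α : Type u} [Preorder α] : PartialOrder (HPoset α) where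
  le A B := A.carrier ⊆ B.carrier
  le_refl _ := subset_rfl
  le_trans _ _ _ h h' := Set.Subset.trans h h'
  le_antisymm A B h h' := by
    cases A; cases B
    simp only [HPoset.mk.injEq]
    exact subset_antisymm h h'

/-- The Smyth power construction: nonempty Scott compact saturated subsets
ordered by reverse inclusion. -/
structure QPoset (α : Type u) [Preorder α] where
  carrier : Set α
  nonempty' : carrier.Nonempty
  compact' : ScottCompact carrier
  upper' : IsUpperSet carrier

instance {α : Type u} [Preorder α] : PartialOrder (QPoset α) where
  le K K' := K'.carrier ⊆ K.carrier
  le_refl _ := subset_rfl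
  le_trans _ _ _ h h' := Set.Subset.trans h' h
  le_antisymm K K' h h' := by
    cases K; cases K'
    simp only [QPoset.mk.injEq]
    exact subset_antisymm h' h

/-- The lattice of Scott open subsets ordered by inclusion. -/
structure OpenSet (α : Type u) [Preorder α] where
  carrier : Set α
  open' : ScottOpen carrier

instance {α : Type u} [Preorder α] : PartialOrder (OpenSet α) where
  le A B := A.carrier ⊆ B.carrier
  le_refl _ := subset_rfl
  le_trans _ _ _ h h' := Set.Subset.trans h h'
  le_antisymm A B h h' := by
    cases A; cases B
    simp only [OpenSet.mk.injEq]
    exact subset_antisymm h h'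

/-- The map φ : H(Q(L)) → Q(H(L)) on underlying subsets. -/
def phiMap {L : Type u} [Preorder L] (𝒜 : Set (QPoset L)) : Set (HPoset L) :=
  {A : HPoset L | ∀ K ∈ 𝒜, (A.carrier ∩ K.carrier).Nonempty}

/-- The map ψ : Q(H(L)) → H(Q(L)) on underlying subsets. -/
def psiMap {L : Type u} [Preorder L] (𝒦 : Set (HPoset L)) : Set (QPoset L) :=
  {K : QPoset L | ∀ A ∈ 𝒦, (K.carrier ∩ A.carrier).Nonempty}

section Scott

variable {α : Type u} [Preorder α]

lemma ScottClosed.scottOpen_compl {A : Set α} (hA : ScottClosed A) : ScottOpen Aᶜ := by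
  refine ⟨hA.1.compl, fun d hdne hdir a hlub ha => ?_⟩
  by_contra hdA
  exact ha (hA.2 d (fun x hx => by_contra fun hxA => hdA ⟨x, hx, hxA⟩) hdne hdir a hlub)

lemma scottOpen_sUnion {𝒰 : Set (Set α)} (h : ∀ U ∈ 𝒰, ScottOpen U) : ScottOpen (⋃₀ 𝒰) := by
  refine ⟨isUpperSet_sUnion fun U hU => (h U hU).1, ?_⟩
  rintro d hdne hdir a hlub ⟨U, hU, haU⟩
  obtain ⟨x, hxd, hxU⟩ := (h U hU).2 d hdne hdir a hlub haU
  exact ⟨x, hxd, U, hU, hxU⟩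

lemma scottOpen_empty : ScottOpen (∅ : Set α) :=
  ⟨isUpperSet_empty, fun _ _ _ _ _ h => h.elim⟩

lemma scottClosed_iInter {ι : Sort*} {C : ι → Set α} (h : ∀ i, ScottClosed (C i)) :
    ScottClosed (⋂ i, C i) :=
  ⟨isLowerSet_iInter fun i => (h i).1, fun d hdC hdne hdir a hlub =>
    Set.mem_iInter.2 fun i => (h i).2 d (hdC.trans (Set.iInter_subset C i)) hdne hdir a hlub⟩

end Scott

namespace WellFiltered

variable {α : Type u} [Preorder α] (hw : WellFiltered α) {d : Set (QPoset α)}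
  (hne : d.Nonempty) (hdir : DirectedOn (· ≤ ·) d)
include hw hne hdir

lemma exists_mem_subset_of_biInter_subset {U : Set α} (hU : ScottOpen U)
    (h : ⋂ K ∈ d, K.carrier ⊆ U) : ∃ K ∈ d, K.carrier ⊆ U := by
  have hdir' : DirectedOn (fun A B : Set α => B ⊆ A) (QPoset.carrier '' d) := by
    rintro _ ⟨K, hK, rfl⟩ _ ⟨K', hK', rfl⟩
    obtain ⟨K'', hK'', h₁, h₂⟩ := hdir K hK K' hK'
    exact ⟨K''.carrier, ⟨K'', hK'', rfl⟩, h₁, h₂⟩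
  obtain ⟨_, ⟨K, hK, rfl⟩, hKU⟩ := hw _ (hne.image _)
    (by rintro _ ⟨K, -, rfl⟩; exact ⟨K.compact', K.upper'⟩) hdir' U hU
    (by rwa [Set.sInter_image])
  exact ⟨K, hK, hKU⟩

lemma biInter_nonempty : (⋂ K ∈ d, K.carrier).Nonempty := by
  rw [Set.nonempty_iff_ne_empty]
  intro h
  obtain ⟨K, -, hK⟩ := hw.exists_mem_subset_of_biInter_subset hne hdir scottOpen_empty h.subset
  exact K.nonempty'.ne_empty (Set.subset_empty_iff.1 hK)

lemma scottCompact_biInter : ScottCompact (⋂ K ∈ d, K.carrier) := by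
  intro 𝒰 h𝒰 hcover
  obtain ⟨K, hK, hK𝒰⟩ :=
    hw.exists_mem_subset_of_biInter_subset hne hdir (scottOpen_sUnion h𝒰) hcover
  obtain ⟨F, hF𝒰, hFfin, hKF⟩ := K.compact' 𝒰 h𝒰 hK𝒰
  exact ⟨F, hF𝒰, hFfin, (Set.biInter_subset_of_mem hK).trans hKF⟩

def biInterQ : QPoset α :=
  ⟨⋂ K ∈ d, K.carrier, hw.biInter_nonempty hne hdir, hw.scottCompact_biInter hne hdir,
    isUpperSet_iInter₂ fun K _ => K.upper'⟩

lemma isLUB_biInterQ : IsLUB d (hw.biInterQ hne hdir) :=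
  ⟨fun _ hK => Set.biInter_subset_of_mem hK,
    fun _ hB => Set.subset_iInter₂ fun _ hK => hB hK⟩

end WellFiltered

lemma scottClosed_setOf_inter_nonempty {α : Type u} [Preorder α] (hw : WellFiltered α)
    {A : Set α} (hA : ScottClosed A) :
    ScottClosed {K : QPoset α | (K.carrier ∩ A).Nonempty} := by
  refine ⟨fun K K' hKK' hK' => hK'.mono (Set.inter_subset_inter_left A hKK'), ?_⟩
  intro d hdA hne hdir a hlub
  rw [hlub.unique (hw.isLUB_biInterQ hne hdir)]
  by_contra hmiss
  obtain ⟨K, hK, hKA⟩ := hw.exists_mem_subset_of_biInter_subset hne hdir hA.scottOpen_compl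
    fun x hx hxA => hmiss ⟨x, hx, hxA⟩
  obtain ⟨x, hxK, hxA⟩ := hdA hK
  exact hKA hxK hxA

theorem psi_well_defined_general {L : Type u} [PartialOrder L]
    (hw : WellFiltered L) (𝒦 : Set (HPoset L)) :
    ScottClosed (psiMap 𝒦) := by
  have hψ : psiMap 𝒦 = ⋂ A : 𝒦, {K : QPoset L | (K.carrier ∩ A.1.carrier).Nonempty} := by
    ext K
    simp [psiMap]
  rw [hψ]
  exact scottClosed_iInter fun A => scottClosed_setOf_inter_nonempty hw A.1.closed'

theorem psi_well_defined {L : Type u} [PartialOrder L] (hd : IsDcpo L)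
    (hw : WellFiltered L) (𝒦 : Set (HPoset L)) (hne : 𝒦.Nonempty)
    (hc : ScottCompact 𝒦) (hu : IsUpperSet 𝒦) :
    ScottClosed (psiMap 𝒦) :=
  psi_well_defined_general hw 𝒦
end

section
/- Let L be a well-filtered dcpo such that φ : H(Q(L)) → Q(H(L)) and ψ : Q(H(L)) → H(Q(L)) are mutually inverse isomorphisms. Then the Scott topology on Q(L) is contained in the upper Vietoris topology. -/
universe u

/- The complement of `ψ 𝒦` is the union of the upper Vietoris basic opens `□ (L ∖ A)`, `A ∈ 𝒦`.
A Scott open `𝒰 ⊆ Q(L)` is the complement of the Scott closed `𝒰ᶜ = ψ (φ 𝒰ᶜ)`, hence such a union. -/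

lemma ScottOpen.scottClosed_compl {α : Type u} [Preorder α] {U : Set α} (h : ScottOpen U) :
    ScottClosed Uᶜ :=
  ⟨h.1.compl, fun d hdU hne hdir a hlub ha ↦
    let ⟨_, hxd, hxU⟩ := h.2 d hne hdir a hlub ha
    hdU hxd hxU⟩

lemma ScottClosed.scottOpen_compl_s13 {α : Type u} [Preorder α] {C : Set α} (h : ScottClosed C) :
    ScottOpen Cᶜ := by
  refine ⟨h.1.compl, fun d hne hdir a hlub ha ↦ ?_⟩
  by_contra hdisj
  exact ha (h.2 d (fun x hx ↦ not_not.mp fun hxC ↦ hdisj ⟨x, hx, hxC⟩) hne hdir a hlub)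

lemma compl_psiMap {L : Type u} [Preorder L] (𝒦 : Set (HPoset L)) :
    (psiMap 𝒦)ᶜ = ⋃ A ∈ 𝒦, {K : QPoset L | K.carrier ⊆ A.carrierᶜ} := by
  ext K
  simp [psiMap, Set.not_nonempty_iff_eq_empty, Set.subset_compl_iff_disjoint_right,
    Set.disjoint_iff_inter_eq_empty]

theorem iso_implies_scott_le_upperVietoris_general {L : Type u} [PartialOrder L]
    (h1 : ∀ 𝒜 : Set (QPoset L), ScottClosed 𝒜 → psiMap (phiMap 𝒜) = 𝒜) :
    ∀ 𝒰 : Set (QPoset L), ScottOpen 𝒰 → ∀ K ∈ 𝒰, ∃ U : Set L, ScottOpen U ∧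
      K.carrier ⊆ U ∧ {K' : QPoset L | K'.carrier ⊆ U} ⊆ 𝒰 := by
  intro 𝒰 h𝒰 K hK
  have h𝒰_eq : 𝒰 = ⋃ A ∈ phiMap 𝒰ᶜ, {K' : QPoset L | K'.carrier ⊆ A.carrierᶜ} := by
    rw [← compl_psiMap, h1 _ h𝒰.scottClosed_compl, compl_compl]
  obtain ⟨A, hA, hKA⟩ := Set.mem_iUnion₂.mp (h𝒰_eq ▸ hK)
  exact ⟨A.carrierᶜ, A.closed'.scottOpen_compl_s13, hKA,
    fun K' hK' ↦ h𝒰_eq ▸ Set.mem_iUnion₂.mpr ⟨A, hA, hK'⟩⟩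

theorem iso_implies_scott_le_upperVietoris {L : Type u} [PartialOrder L]
    (hd : IsDcpo L) (hw : WellFiltered L)
    (h1 : ∀ 𝒜 : Set (QPoset L), ScottClosed 𝒜 → psiMap (phiMap 𝒜) = 𝒜)
    (h2 : ∀ 𝒦 : Set (HPoset L), 𝒦.Nonempty → ScottCompact 𝒦 → IsUpperSet 𝒦 →
      phiMap (psiMap 𝒦) = 𝒦) :
    ∀ 𝒰 : Set (QPoset L), ScottOpen 𝒰 → ∀ K ∈ 𝒰, ∃ U : Set L, ScottOpen U ∧
      K.carrier ⊆ U ∧ {K' : QPoset L | K'.carrier ⊆ U} ⊆ 𝒰 :=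
  iso_implies_scott_le_upperVietoris_general h1
end
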